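/- arXiv:1212.5484 — 8 statements merged into one kernel-verified Lean document; each statement's English description precedes it below -/
import Mathlib

section
/- For any nonzero vectors v1, v2, v3 in a real inner product space, sin θ(v1,v3) ≤ sin θ(v1,v2) + sin θ(v2,v3), where sin θ(u,w) = ‖u ∧ w‖/(‖u‖·‖w‖) is equivalently defined as ‖π_{w⊥}(u)‖/‖u‖, the norm of the orthogonal projection of u/‖u‖ onto the orthogonal complement of w. -/
/-!
`P_w u = (⟪u,w⟫/‖w‖²) w` is the orthogonal projection of `u` onto `ℝ w`, so `‖u‖ sin θ(u,w)`
is the distance `‖u - P_w u‖` from `u` to that line. With `k = ⟪a,b⟫/‖b‖²`, the vector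
`a - k P_c b = (a - P_b a) + k (b - P_c b)` differs from `a` by a multiple of `c`, hence
`‖a - P_c a‖ ≤ ‖a - P_b a‖ + |k| ‖b - P_c b‖`. Dividing by `‖a‖` turns `|k| ‖b‖ / ‖a‖` into
`|cos θ(a,b)| ≤ 1`.
-/

open RealInnerProductSpace

/-- The sine of the angle between two nonzero vectors `u` and `w`:
`sin θ(u,w) = ‖u - (⟪u,w⟫/‖w‖²) w‖ / ‖u‖`. -/
noncomputable def sinAngleVec {V : Type*} [NormedAddCommGroup V]
    [InnerProductSpace ℝ V] (u w : V) : ℝ :=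
  ‖u - (⟪u, w⟫ / ‖w‖ ^ 2) • w‖ / ‖u‖

section

variable {V : Type*} [NormedAddCommGroup V] [InnerProductSpace ℝ V]

theorem norm_sub_inner_div_smul_le (u w : V) (t : ℝ) :
    ‖u - (⟪u, w⟫ / ‖w‖ ^ 2) • w‖ ≤ ‖u - t • w‖ := by
  have hP : (ℝ ∙ w).starProjection u = (⟪u, w⟫ / ‖w‖ ^ 2) • w := by
    rw [Submodule.starProjection_singleton, real_inner_comm]; rfl
  rw [← hP, Submodule.starProjection_minimal]
  exact ciInf_le ⟨0, by rintro _ ⟨x, rfl⟩; positivity⟩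
    (⟨t • w, Submodule.smul_mem _ _ (Submodule.mem_span_singleton_self w)⟩ : ℝ ∙ w)

theorem norm_sub_inner_div_smul_le_add (a b c : V) :
    ‖a - (⟪a, c⟫ / ‖c‖ ^ 2) • c‖ ≤
      ‖a - (⟪a, b⟫ / ‖b‖ ^ 2) • b‖ + |⟪a, b⟫ / ‖b‖ ^ 2| * ‖b - (⟪b, c⟫ / ‖c‖ ^ 2) • c‖ := by
  set k := ⟪a, b⟫ / ‖b‖ ^ 2
  calc ‖a - (⟪a, c⟫ / ‖c‖ ^ 2) • c‖ ≤ ‖a - (k * (⟪b, c⟫ / ‖c‖ ^ 2)) • c‖ :=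
        norm_sub_inner_div_smul_le a c _
    _ = ‖(a - k • b) + k • (b - (⟪b, c⟫ / ‖c‖ ^ 2) • c)‖ := by
        rw [smul_sub, smul_smul]; abel_nf
    _ ≤ ‖a - k • b‖ + |k| * ‖b - (⟪b, c⟫ / ‖c‖ ^ 2) • c‖ := by
        grw [norm_add_le, norm_smul, Real.norm_eq_abs]

theorem sinAngleVec_le_add_abs_cos_mul (a b c : V) :
    sinAngleVec a c ≤ sinAngleVec a b + |⟪a, b⟫ / (‖a‖ * ‖b‖)| * sinAngleVec b c := by
  unfold sinAngleVec
  calc _ ≤ (‖a - (⟪a, b⟫ / ‖b‖ ^ 2) • b‖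
          + |⟪a, b⟫ / ‖b‖ ^ 2| * ‖b - (⟪b, c⟫ / ‖c‖ ^ 2) • c‖) / ‖a‖ := by
        gcongr; exact norm_sub_inner_div_smul_le_add a b c
    _ = _ := by simp only [abs_div, abs_mul, abs_pow, abs_norm]; ring

theorem sinAngleVec_nonneg (u w : V) : 0 ≤ sinAngleVec u w := by
  unfold sinAngleVec; positivity

end

theorem sinAngleVec_triangle_general {V : Type*} [NormedAddCommGroup V]
    [InnerProductSpace ℝ V]
    (v₁ v₂ v₃ : V) :
    sinAngleVec v₁ v₃ ≤ sinAngleVec v₁ v₂ + sinAngleVec v₂ v₃ := by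
  calc sinAngleVec v₁ v₃
      ≤ sinAngleVec v₁ v₂ + |⟪v₁, v₂⟫ / (‖v₁‖ * ‖v₂‖)| * sinAngleVec v₂ v₃ :=
        sinAngleVec_le_add_abs_cos_mul v₁ v₂ v₃
    _ ≤ sinAngleVec v₁ v₂ + 1 * sinAngleVec v₂ v₃ := by
        gcongr
        · exact sinAngleVec_nonneg v₂ v₃
        · exact abs_real_inner_div_norm_mul_norm_le_one v₁ v₂
    _ = sinAngleVec v₁ v₂ + sinAngleVec v₂ v₃ := by rw [one_mul]

/-- Triangle inequality for the sine of the angle between nonzero vectors. -/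
theorem sinAngleVec_triangle {V : Type*} [NormedAddCommGroup V]
    [InnerProductSpace ℝ V] [FiniteDimensional ℝ V]
    (v₁ v₂ v₃ : V) (h₁ : v₁ ≠ 0) (h₂ : v₂ ≠ 0) (h₃ : v₃ ≠ 0) :
    sinAngleVec v₁ v₃ ≤ sinAngleVec v₁ v₂ + sinAngleVec v₂ v₃ :=
  sinAngleVec_triangle_general v₁ v₂ v₃
end

section
/- Let S1, S2, T be linear subspaces of a finite-dimensional real inner product space V with S1 orthogonal to S2. Then sin θ(S1 + S2, T) ≤ sin θ(S1, T) + sin θ(S2, T), where for subspaces sin θ(S,T) = sup over nonzero s ∈ S of ‖π_{T⊥}(s)‖/‖s‖ and π_{T⊥} is orthogonal projection onto the orthogonal complement of T. -/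
open RealInnerProductSpace

variable {V : Type*} [NormedAddCommGroup V] [InnerProductSpace ℝ V]
  [FiniteDimensional ℝ V]

/-- The sine of the angle between a vector `s` and a subspace `T`:
`sin θ(s,T) = ‖π_{T⊥}(s)‖ / ‖s‖`, the norm of the orthogonal projection of
`s/‖s‖` onto the orthogonal complement of `T`. -/
noncomputable def sinAngleVecSub (s : V) (T : Submodule ℝ V) : ℝ :=
  ‖(Tᗮ.orthogonalProjectionOnto s : V)‖ / ‖s‖

/-- The sine of the angle between subspaces `S` and `T`:
`sin θ(S,T) = sup { sin θ(s,T) : s ∈ S, s ≠ 0 }` (with value `0` for `S = {0}`). -/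
noncomputable def sinAngleSub (S T : Submodule ℝ V) : ℝ :=
  sSup ((fun s => sinAngleVecSub s T) '' {s : V | s ∈ S ∧ s ≠ 0})

/-! Write an element of `S₁ ⊔ S₂` as `s₁ + s₂` with `s₁ ⟂ s₂`. By Pythagoras both `‖s₁‖` and
`‖s₂‖` are at most `‖s₁ + s₂‖`, while by the triangle inequality the projection of `s₁ + s₂`
onto `Tᗮ` has norm at most `sin θ(S₁,T) ‖s₁‖ + sin θ(S₂,T) ‖s₂‖`. -/

theorem norm_le_norm_add_of_inner_eq_zero {F : Type*} [NormedAddCommGroup F]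
    [InnerProductSpace ℝ F] {x y : F} (h : ⟪x, y⟫ = 0) : ‖x‖ ≤ ‖x + y‖ := by
  rw [mul_self_le_mul_self_iff (norm_nonneg _) (norm_nonneg _),
    norm_add_sq_eq_norm_sq_add_norm_sq_real h]
  exact le_add_of_nonneg_right (mul_self_nonneg _)

theorem sinAngleVecSub_le_one (s : V) (T : Submodule ℝ V) : sinAngleVecSub s T ≤ 1 :=
  div_le_one_of_le₀ (Tᗮ.norm_orthogonalProjectionOnto_apply_le s) (norm_nonneg s)

theorem sinAngleSub_nonneg (S T : Submodule ℝ V) : 0 ≤ sinAngleSub S T :=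
  Real.sSup_nonneg <| by
    rintro _ ⟨s, -, rfl⟩
    exact div_nonneg (norm_nonneg _) (norm_nonneg _)

theorem norm_orthogonalProjectionOnto_le_sinAngleSub_mul {S : Submodule ℝ V} (T : Submodule ℝ V)
    {s : V} (hs : s ∈ S) : ‖(Tᗮ.orthogonalProjectionOnto s : V)‖ ≤ sinAngleSub S T * ‖s‖ := by
  rcases eq_or_ne s 0 with rfl | hne
  · simp
  have hbdd : BddAbove ((fun s => sinAngleVecSub s T) '' {s : V | s ∈ S ∧ s ≠ 0}) :=
    ⟨1, by rintro _ ⟨s, -, rfl⟩; exact sinAngleVecSub_le_one s T⟩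
  have hle : sinAngleVecSub s T ≤ sinAngleSub S T := le_csSup hbdd ⟨s, ⟨hs, hne⟩, rfl⟩
  rwa [sinAngleVecSub, div_le_iff₀ (norm_pos_iff.mpr hne)] at hle

theorem sinAngleSub_le_of_forall_norm_le {S T : Submodule ℝ V} {c : ℝ} (hc : 0 ≤ c)
    (h : ∀ s ∈ S, ‖(Tᗮ.orthogonalProjectionOnto s : V)‖ ≤ c * ‖s‖) : sinAngleSub S T ≤ c :=
  Real.sSup_le (by
    rintro _ ⟨s, ⟨hs, hne⟩, rfl⟩
    exact (div_le_iff₀ (norm_pos_iff.mpr hne)).mpr (h s hs)) hc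

/-- If `S₁` is orthogonal to `S₂` then
`sin θ(S₁ + S₂, T) ≤ sin θ(S₁, T) + sin θ(S₂, T)`. -/
theorem sinAngleSub_sup_le (S₁ S₂ T : Submodule ℝ V)
    (horth : ∀ s₁ ∈ S₁, ∀ s₂ ∈ S₂, ⟪s₁, s₂⟫ = 0) :
    sinAngleSub (S₁ ⊔ S₂) T ≤ sinAngleSub S₁ T + sinAngleSub S₂ T := by
  refine sinAngleSub_le_of_forall_norm_le
    (add_nonneg (sinAngleSub_nonneg S₁ T) (sinAngleSub_nonneg S₂ T)) fun s hs => ?_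
  obtain ⟨s₁, h₁, s₂, h₂, rfl⟩ := Submodule.mem_sup.mp hs
  have hle₁ : ‖s₁‖ ≤ ‖s₁ + s₂‖ := norm_le_norm_add_of_inner_eq_zero (horth s₁ h₁ s₂ h₂)
  have hle₂ : ‖s₂‖ ≤ ‖s₁ + s₂‖ := by
    rw [add_comm]
    exact norm_le_norm_add_of_inner_eq_zero (by rw [real_inner_comm]; exact horth s₁ h₁ s₂ h₂)
  calc ‖(Tᗮ.orthogonalProjectionOnto (s₁ + s₂) : V)‖
      ≤ ‖(Tᗮ.orthogonalProjectionOnto s₁ : V)‖ + ‖(Tᗮ.orthogonalProjectionOnto s₂ : V)‖ := by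
        rw [map_add]
        exact norm_add_le _ _
    _ ≤ sinAngleSub S₁ T * ‖s₁‖ + sinAngleSub S₂ T * ‖s₂‖ :=
        add_le_add (norm_orthogonalProjectionOnto_le_sinAngleSub_mul T h₁)
          (norm_orthogonalProjectionOnto_le_sinAngleSub_mul T h₂)
    _ ≤ sinAngleSub S₁ T * ‖s₁ + s₂‖ + sinAngleSub S₂ T * ‖s₁ + s₂‖ := by
        gcongr
        · exact sinAngleSub_nonneg S₁ T
        · exact sinAngleSub_nonneg S₂ T
    _ = (sinAngleSub S₁ T + sinAngleSub S₂ T) * ‖s₁ + s₂‖ := by ring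
end

section
/- For the logarithmic spiral X = {(e^{t/tan β} cos t, e^{t/tan β} sin t) : t ∈ ℝ} with fixed 0 < β < π/2, the sine of the angle between the secant line from a point x ∈ X to the origin and the tangent line T_x X equals sin β, constant and nonzero for all x ∈ X; in particular Whitney's condition (b) fails for the pair (X, {0}) at the origin. -/
/-!
The tangent of the spiral `γ(t) = e^{a t} (cos t, sin t)` is `γ'(t) = a γ(t) + J γ(t)`, where `J` is
the rotation by a right angle: in complex notation `γ(t) = e^{(a + i) t}` and `γ' = (a + i) γ`.
Since `J γ ⟂ γ` and `‖J γ‖ = ‖γ‖`, the cosine of the angle between `γ(t)` and `γ'(t)` is the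
constant `a / √(a² + 1)`, so its sine is `1 / √(a² + 1)`, which equals `sin β` for `a = cot β`.
-/

open RealInnerProductSpace Real

theorem HasDerivAt.toLp {ι : Type*} [Fintype ι] {E : ι → Type*} [∀ i, NormedAddCommGroup (E i)]
    [∀ i, NormedSpace ℝ (E i)] (p : ENNReal) [Fact (1 ≤ p)] {φ : ℝ → ∀ i, E i} {φ' : ∀ i, E i}
    {x : ℝ} (h : HasDerivAt φ φ' x) :
    HasDerivAt (fun s => WithLp.toLp p (φ s)) (WithLp.toLp p φ') x :=
  (PiLp.hasFDerivAt_toLp p (φ x)).comp_hasDerivAt x h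

theorem inner_normalize_smul_add_of_inner_eq_zero {E : Type*} [NormedAddCommGroup E]
    [InnerProductSpace ℝ E] {x y : E} (hx : x ≠ 0) (hxy : ⟪x, y⟫ = 0) (hyx : ‖y‖ = ‖x‖) (a : ℝ) :
    ⟪‖x‖⁻¹ • x, ‖a • x + y‖⁻¹ • (a • x + y)⟫ = a / √(a ^ 2 + 1) := by
  have hx' : 0 < ‖x‖ := norm_pos_iff.2 hx
  have hnorm : ‖a • x + y‖ = √(a ^ 2 + 1) * ‖x‖ := by
    refine (pow_left_inj₀ (norm_nonneg _) (by positivity) two_ne_zero).1 ?_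
    rw [norm_add_sq_real, real_inner_smul_left, hxy, norm_smul, hyx, mul_pow, mul_pow,
      sq_sqrt (by positivity), norm_eq_abs, sq_abs]
    ring
  have hinner : ⟪x, a • x + y⟫ = a * ‖x‖ ^ 2 := by
    rw [inner_add_right, real_inner_smul_right, hxy, real_inner_self_eq_norm_sq, add_zero]
  rw [real_inner_smul_left, real_inner_smul_right, hinner, hnorm]
  field_simp

theorem sqrt_one_sub_div_sqrt_sq_add_one_sq (a : ℝ) :
    √(1 - (a / √(a ^ 2 + 1)) ^ 2) = (√(a ^ 2 + 1))⁻¹ := by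
  rw [div_pow, sq_sqrt (by positivity), one_sub_div (by positivity), add_sub_cancel_left,
    sqrt_div zero_le_one, sqrt_one, one_div]

theorem inv_sqrt_inv_tan_sq_add_one {β : ℝ} (hβ : 0 < sin β) :
    (√((tan β)⁻¹ ^ 2 + 1))⁻¹ = sin β := by
  rw [tan_eq_sin_div_cos, inv_div, div_pow, div_add_one (by positivity), cos_sq_add_sin_sq,
    sqrt_div zero_le_one, sqrt_one, sqrt_sq hβ.le, one_div, inv_inv]

def quarterTurn (v : EuclideanSpace ℝ (Fin 2)) : EuclideanSpace ℝ (Fin 2) := !₂[-v 1, v 0]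

theorem inner_quarterTurn_right (v : EuclideanSpace ℝ (Fin 2)) : ⟪v, quarterTurn v⟫ = 0 := by
  simp only [quarterTurn, PiLp.inner_apply, Fin.sum_univ_two,
    Matrix.cons_val_zero, Matrix.cons_val_one, RCLike.inner_apply, conj_trivial]
  ring

theorem norm_quarterTurn (v : EuclideanSpace ℝ (Fin 2)) : ‖quarterTurn v‖ = ‖v‖ := by
  simp [quarterTurn, EuclideanSpace.norm_eq, Fin.sum_univ_two, add_comm]

noncomputable def logSpiral (a t : ℝ) : EuclideanSpace ℝ (Fin 2) :=
  !₂[exp (a * t) * cos t, exp (a * t) * sin t]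

theorem norm_logSpiral (a t : ℝ) : ‖logSpiral a t‖ = exp (a * t) := by
  rw [EuclideanSpace.norm_eq, ← sqrt_sq (exp_pos (a * t)).le]
  congr 1
  simp only [logSpiral, Fin.sum_univ_two, PiLp.toLp_apply, Matrix.cons_val_zero,
    Matrix.cons_val_one, norm_eq_abs, sq_abs]
  linear_combination exp (a * t) ^ 2 * cos_sq_add_sin_sq t

theorem logSpiral_ne_zero (a t : ℝ) : logSpiral a t ≠ 0 :=
  norm_pos_iff.1 (norm_logSpiral a t ▸ exp_pos _)

theorem hasDerivAt_logSpiral (a t : ℝ) :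
    HasDerivAt (logSpiral a) (a • logSpiral a t + quarterTurn (logSpiral a t)) t := by
  have hexp : HasDerivAt (fun s => exp (a * s)) (exp (a * t) * a) t := by
    simpa using ((hasDerivAt_id t).const_mul a).exp
  have hcoord : HasDerivAt (fun s => ![exp (a * s) * cos s, exp (a * s) * sin s])
      ![exp (a * t) * a * cos t + exp (a * t) * -sin t,
        exp (a * t) * a * sin t + exp (a * t) * cos t] t :=
    hasDerivAt_pi.2 <| Fin.forall_fin_two.2
      ⟨hexp.mul (hasDerivAt_cos t), hexp.mul (hasDerivAt_sin t)⟩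
  refine (hcoord.toLp 2).congr_deriv (PiLp.ext <| Fin.forall_fin_two.2 ⟨?_, ?_⟩) <;>
  · simp only [logSpiral, quarterTurn, PiLp.add_apply, PiLp.smul_apply, smul_eq_mul,
      PiLp.toLp_apply, Matrix.cons_val_zero, Matrix.cons_val_one]
    ring

/-- For the logarithmic spiral `γ(t) = (e^{t/tan β} cos t, e^{t/tan β} sin t)`
with `0 < β < π/2`, the sine of the angle between the secant line from
`x = γ(t)` to the origin (spanned by `x`) and the tangent line `T_x X`
(spanned by `γ'(t)`) is constantly equal to `sin β ≠ 0`; in particular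
Whitney's condition (b) fails for the pair `(X, {0})` at the origin. -/
theorem log_spiral_constant_angle (β : ℝ) (hβ0 : 0 < β) (hβ : β < π / 2)
    (γ : ℝ → EuclideanSpace ℝ (Fin 2))
    (hγ : ∀ t : ℝ, γ t = ![Real.exp (t / Real.tan β) * Real.cos t,
                           Real.exp (t / Real.tan β) * Real.sin t]) :
    ∀ t : ℝ,
      Real.sqrt (1 - ⟪‖γ t‖⁻¹ • γ t, ‖deriv γ t‖⁻¹ • deriv γ t⟫ ^ 2)
        = Real.sin β ∧ Real.sin β ≠ 0 := by
  intro t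
  have hsin : 0 < sin β := sin_pos_of_pos_of_lt_pi hβ0 (by linarith [pi_pos])
  obtain rfl : γ = logSpiral (tan β)⁻¹ := funext fun s =>
    WithLp.ofLp_injective 2 (by rw [hγ, div_eq_inv_mul]; rfl)
  rw [(hasDerivAt_logSpiral _ t).deriv, inner_normalize_smul_add_of_inner_eq_zero
    (logSpiral_ne_zero _ t) (inner_quarterTurn_right _) (norm_quarterTurn _),
    sqrt_one_sub_div_sqrt_sq_add_one_sq, inv_sqrt_inv_tan_sq_add_one hsin]
  exact ⟨rfl, hsin.ne'⟩
end

section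
/- Let F(x,y,z,t) = x⁵ + txy⁶ + y⁷z + z¹⁵. There exist ε > 0 and an analytic function λ : (-ε, ε) → ℂ with λ(0) = 1 such that for all s with |s| < ε, the curve γ(s) = (s⁸, a·s⁵, (4/a⁷)·λ(s)·s⁵, -(5/a⁶)·s²) satisfies F(γ(s)) = 0, for any fixed nonzero a ∈ ℂ. -/
/-!
Along the curve, `F` equals `4 s⁴⁰ (λ + c s³⁵ λ¹⁵ - 1)` with `c = (4/a⁷)¹⁵/4`, so it suffices to
solve `λ + w λ¹⁵ = 1` for `λ` analytically in `w = c s³⁵`, with `λ = 1` at `w = 0`. That root is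
the local inverse of `λ ↦ (1 - λ)/λ¹⁵` near `λ = 1`, analytic by the analytic inverse function
theorem.
-/

open Filter Topology

section LocalInverse

variable {𝕜 : Type*} [NontriviallyNormedField 𝕜] [CompleteSpace 𝕜] [CharZero 𝕜]

theorem AnalyticAt.exists_analyticAt_rightInverse {f : 𝕜 → 𝕜} {x : 𝕜} (hf : AnalyticAt 𝕜 f x)
    (hf' : deriv f x ≠ 0) :
    ∃ g : 𝕜 → 𝕜, AnalyticAt 𝕜 g (f x) ∧ g (f x) = x ∧ ∀ᶠ y in 𝓝 (f x), f (g y) = y :=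
  ⟨_, hf.analyticAt_localInverse hf', HasStrictFDerivAt.localInverse_apply_image _,
    HasStrictDerivAt.eventually_right_inverse _ _⟩

theorem exists_analyticAt_add_mul_pow_eq_one (n : ℕ) :
    ∃ g : 𝕜 → 𝕜, AnalyticAt 𝕜 g 0 ∧ g 0 = 1 ∧ ∀ᶠ w in 𝓝 0, g w + w * g w ^ n = 1 := by
  let φ : 𝕜 → 𝕜 := fun t => (1 - t) / t ^ n
  have hφ : AnalyticAt 𝕜 φ 1 :=
    (analyticAt_const.sub analyticAt_id).div (analyticAt_id.pow n) (by simp)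
  have hφ' : deriv φ 1 = -1 := by
    have := ((hasDerivAt_id' (1 : 𝕜)).const_sub 1).fun_div ((hasDerivAt_id' (1 : 𝕜)).fun_pow n)
      (by simp)
    simpa using this.deriv
  have hφ1 : φ 1 = 0 := by simp [φ]
  obtain ⟨g, hg, hg0, hφg⟩ := hφ.exists_analyticAt_rightInverse (by simp [hφ'])
  rw [hφ1] at hg hg0 hφg
  have hg_ne : ∀ᶠ w in 𝓝 0, g w ≠ 0 :=
    hg.continuousAt.eventually_ne (by simp [hg0])
  refine ⟨g, hg, hg0, ?_⟩
  filter_upwards [hφg, hg_ne] with w hw hne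
  rw [div_eq_iff (pow_ne_zero n hne)] at hw
  linear_combination -hw

end LocalInverse

theorem exists_analyticOnNhd_add_mul_pow_eq_one (k : ℂ) (m n : ℕ) (hm : m ≠ 0) :
    ∃ ε > (0 : ℝ), ∃ l : ℝ → ℂ, AnalyticOnNhd ℝ l (Set.Ioo (-ε) ε) ∧ l 0 = 1 ∧
      ∀ s : ℝ, |s| < ε → l s + k * (s : ℂ) ^ m * l s ^ n = 1 := by
  obtain ⟨g, hg, hg0, hroot⟩ := exists_analyticAt_add_mul_pow_eq_one (𝕜 := ℂ) n
  let w : ℝ → ℂ := fun s => k * (s : ℂ) ^ m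
  have hw : ∀ s, AnalyticAt ℝ w s := fun s =>
    analyticAt_const.mul ((Complex.ofRealCLM.analyticAt s).pow m)
  have hw0 : w 0 = 0 := by simp [w, hm]
  have hev : ∀ᶠ s in 𝓝 (0 : ℝ), AnalyticAt ℂ g (w s) ∧ g (w s) + w s * g (w s) ^ n = 1 := by
    have hev0 : ∀ᶠ v in 𝓝 (w 0), AnalyticAt ℂ g v ∧ g v + v * g v ^ n = 1 := by
      rw [hw0]
      exact hg.eventually_analyticAt.and hroot
    exact (hw 0).continuousAt.eventually hev0
  obtain ⟨ε, hε, hball⟩ := Metric.eventually_nhds_iff.mp hev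
  simp only [Real.dist_eq, sub_zero] at hball
  refine ⟨ε, hε, g ∘ w, fun s hs => ?_, by simp [hw0, hg0], fun s hs => (hball hs).2⟩
  exact ((hball (abs_lt.mpr hs)).1.restrictScalars).comp (hw s)

theorem brianconSpeder_curve_eval {a : ℂ} (ha : a ≠ 0) (l s : ℂ) :
    (s ^ 8) ^ 5 + -(5 / a ^ 6) * s ^ 2 * s ^ 8 * (a * s ^ 5) ^ 6 +
        (a * s ^ 5) ^ 7 * (4 / a ^ 7 * l * s ^ 5) + (4 / a ^ 7 * l * s ^ 5) ^ 15 =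
      4 * s ^ 40 * (l + (4 / a ^ 7) ^ 15 / 4 * s ^ 35 * l ^ 15 - 1) := by
  field_simp
  ring

/-- For `F(x,y,z,t) = x⁵ + txy⁶ + y⁷z + z¹⁵` and any fixed nonzero `a ∈ ℂ`,
there are `ε > 0` and an analytic function `l : (-ε,ε) → ℂ` with `l 0 = 1`
such that the curve `γ(s) = (s⁸, a·s⁵, (4/a⁷)·l(s)·s⁵, -(5/a⁶)·s²)` lies in
`F⁻¹(0)` for `|s| < ε`. -/
theorem briancon_speder_curve_on_variety
    (F : ℂ → ℂ → ℂ → ℂ → ℂ)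
    (hF : ∀ x y z t : ℂ, F x y z t = x ^ 5 + t * x * y ^ 6 + y ^ 7 * z + z ^ 15)
    (a : ℂ) (ha : a ≠ 0) :
    ∃ ε > (0 : ℝ), ∃ l : ℝ → ℂ,
      AnalyticOnNhd ℝ l (Set.Ioo (-ε) ε) ∧ l 0 = 1 ∧
      ∀ s : ℝ, |s| < ε →
        F ((s : ℂ) ^ 8) (a * (s : ℂ) ^ 5) ((4 / a ^ 7) * l s * (s : ℂ) ^ 5)
          (-(5 / a ^ 6) * (s : ℂ) ^ 2) = 0 := by
  obtain ⟨ε, hε, l, hl, hl0, hroot⟩ :=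
    exists_analyticOnNhd_add_mul_pow_eq_one ((4 / a ^ 7) ^ 15 / 4) 35 15 (by norm_num)
  refine ⟨ε, hε, l, hl, hl0, fun s hs => ?_⟩
  rw [hF, brianconSpeder_curve_eval ha, hroot s hs, sub_self, mul_zero]
end

section
/- With hypotheses as in the previous lemma (F analytic, F∘γ ≡ 0, x(s) = As^a + …, grad_x F∘γ(s) = Bs^b + … with A,B ≠ 0): the condition ν(Σᵢ xᵢ·(∂F/∂xᵢ)∘γ) > a + b holds if and only if ν(t·(∂F/∂t)∘γ) > a + b. (Briançon–Speder's lemma: (b^π) along the arc is equivalent to ν(t) + ν(∂F/∂t∘γ) > ν(x) + ν(J_x F∘γ).) -/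
/-!
Differentiating `F ∘ γ ≡ 0` gives `Σ s xᵢ' ∂ᵢF + s t' ∂ₜF = 0` along the arc. For an analytic `f`
with `f 0 = 0`, `s f'` and `f` vanish to the same order, so `x = A s^a + o(s^a)` gives
`s x' = a A s^a + o(s^a)`, and `s t' ∂ₜF` is comparable to `t ∂ₜF`. Hence `Σ xᵢ ∂ᵢF` and
`Σ s xᵢ' ∂ᵢF` are `⟨A, B⟩ s^(a+b)` and `a ⟨A, B⟩ s^(a+b)` up to `o(s^(a+b))`, and since `a ≠ 0`
(because `γ 0 = 0`) both conditions say `⟨A, B⟩ = 0`.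
-/

open Filter Asymptotics Topology

theorem ContinuousAt.isTheta_one {α E 𝕜 : Type*} [TopologicalSpace α] [NormedAddCommGroup E]
    [NormedField 𝕜] {g : α → E} {x : α} (hg : ContinuousAt g x) (hx : g x ≠ 0) :
    g =Θ[𝓝 x] fun _ => (1 : 𝕜) := by
  refine ⟨isBigO_const_of_tendsto hg one_ne_zero,
    (isBigO_const_left_iff_pos_le_norm one_ne_zero).2 ⟨‖g x‖ / 2, by positivity, ?_⟩⟩
  exact hg.norm.eventually (le_mem_nhds (half_lt_self (norm_pos_iff.2 hx)))

theorem ContinuousLinearMap.apply_prod_eq_sum {ι R M : Type*} [Fintype ι] [DecidableEq ι]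
    [Semiring R] [TopologicalSpace R] [AddCommMonoid M] [TopologicalSpace M] [Module R M]
    (L : (ι → R) × R →L[R] M) (v : ι → R) (c : R) :
    L (v, c) = ∑ i, v i • L (Pi.single i 1, 0) + c • L (0, 1) := by
  have hvc : ((v, c) : (ι → R) × R) = ∑ i, v i • (Pi.single i 1, 0) + c • (0, 1) := by
    ext j <;> simp [Prod.fst_sum, Prod.snd_sum, Finset.sum_apply, Pi.single_apply]
  simp only [hvc, map_add, map_sum, map_smul]

section
variable {𝕜 E : Type*} [NontriviallyNormedField 𝕜] [NormedAddCommGroup E] [NormedSpace 𝕜 E]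

theorem AnalyticAt.smul_deriv_isTheta [CharZero 𝕜] [CompleteSpace E] {f : 𝕜 → E}
    (hf : AnalyticAt 𝕜 f 0) (hf0 : f 0 = 0) : (fun s => s • deriv f s) =Θ[𝓝 0] f := by
  cases hm : analyticOrderAt f 0 with
  | top =>
    have hzero : f =ᶠ[𝓝 0] 0 := analyticOrderAt_eq_top.1 hm
    refine EventuallyEq.isTheta ?_
    filter_upwards [hzero, hzero.deriv] with s hs hs'
    simp [hs, hs']
  | coe m =>
    obtain ⟨u, hu, hu0, hfu⟩ := hf.analyticOrderAt_eq_natCast.1 hm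
    replace hfu : f =ᶠ[𝓝 0] fun s => s ^ m • u s := by
      filter_upwards [hfu] with s hs
      rw [hs, sub_zero]
    have hm0 : m ≠ 0 := by
      rintro rfl
      simp [← hf0, hfu.self_of_nhds] at hu0
    have hderiv : (fun s => s • deriv f s) =ᶠ[𝓝 0]
        fun s => s ^ m • ((m : 𝕜) • u s + s • deriv u s) := by
      filter_upwards [hfu.deriv, hu.eventually_analyticAt] with s hs hus
      have hd : HasDerivAt (fun s => s ^ m • u s)
          (s ^ m • deriv u s + ((m : 𝕜) * s ^ (m - 1)) • u s) s :=
        (hasDerivAt_pow m s).smul hus.differentiableAt.hasDerivAt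
      rw [hs, hd.deriv]
      have hpow : s * ((m : 𝕜) * s ^ (m - 1)) = s ^ m * m := by
        rw [mul_left_comm, mul_pow_sub_one hm0, mul_comm]
      rw [smul_add, smul_add, smul_smul, smul_smul, smul_smul, smul_smul, hpow, mul_comm s,
        add_comm]
    have hv : ContinuousAt (fun s => (m : 𝕜) • u s + s • deriv u s) 0 := by
      have := hu.deriv.continuousAt; fun_prop
    have hv0 : (m : 𝕜) • u 0 + (0 : 𝕜) • deriv u 0 ≠ 0 := by
      simpa [hm0] using hu0
    calc (fun s => s • deriv f s)
        =ᶠ[𝓝 0] fun s => s ^ m • ((m : 𝕜) • u s + s • deriv u s) := hderiv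
      _ =Θ[𝓝 0] fun s => s ^ m • (1 : 𝕜) := isTheta_rfl.smul (hv.isTheta_one (𝕜 := 𝕜) hv0)
      _ =Θ[𝓝 0] fun s => s ^ m • u s := (isTheta_rfl.smul (hu.continuousAt.isTheta_one hu0)).symm
      _ =ᶠ[𝓝 0] f := hfu.symm

theorem AnalyticAt.smul_deriv_sub_isLittleO [CharZero 𝕜] [CompleteSpace E] {f : 𝕜 → E} {c : E}
    {N : ℕ} (hf : AnalyticAt 𝕜 f 0) (h : (fun s => f s - s ^ N • c) =o[𝓝 0] fun s => s ^ N) :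
    (fun s => s • deriv f s - ((N : 𝕜) * s ^ N) • c) =o[𝓝 0] fun s => s ^ N := by
  have hr : AnalyticAt 𝕜 (fun s => f s - s ^ N • c) 0 := by fun_prop
  have hr0 : f 0 - (0 : 𝕜) ^ N • c = 0 := (isLittleO_pure (f'' := fun s => f s - s ^ N • c)).1
    (h.mono (pure_le_nhds 0))
  refine ((hr.smul_deriv_isTheta hr0).trans_isLittleO h).congr' ?_ EventuallyEq.rfl
  filter_upwards [hf.eventually_analyticAt] with s hfs
  have hd : HasDerivAt (fun s => f s - s ^ N • c) (deriv f s - ((N : 𝕜) * s ^ (N - 1)) • c) s :=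
    hfs.differentiableAt.hasDerivAt.sub ((hasDerivAt_pow N s).smul_const c)
  have hpow : s * ((N : 𝕜) * s ^ (N - 1)) = N * s ^ N := by
    rcases N with _ | N
    · simp
    · rw [mul_left_comm, Nat.add_sub_cancel, ← pow_succ']
  rw [hd.deriv, smul_sub, smul_smul, hpow]

theorem sum_deriv_smul_fderiv_add_eq_zero {ι : Type*} [Fintype ι] [DecidableEq ι]
    {F : (ι → 𝕜) × 𝕜 → E} {γ : 𝕜 → (ι → 𝕜) × 𝕜} {s : 𝕜}
    (hF : DifferentiableAt 𝕜 F (γ s)) (hγ : DifferentiableAt 𝕜 γ s)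
    (h0 : (fun z => F (γ z)) =ᶠ[𝓝 s] 0) :
    ∑ i, deriv (fun z => (γ z).1 i) s • fderiv 𝕜 F (γ s) (Pi.single i 1, 0)
      + deriv (fun z => (γ z).2) s • fderiv 𝕜 F (γ s) (0, 1) = 0 := by
  have hγ' : HasDerivAt (fun z => ((γ z).1, (γ z).2))
      (fun i => deriv (fun z => (γ z).1 i) s, deriv (fun z => (γ z).2) s) s :=
    (hasDerivAt_pi.2 fun i => (differentiableAt_pi.1 hγ.fst i).hasDerivAt).prodMk
      hγ.snd.hasDerivAt
  have h := (hF.hasFDerivAt.comp_hasDerivAt s hγ').unique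
    ((hasDerivAt_const s 0).congr_of_eventuallyEq h0)
  rwa [ContinuousLinearMap.apply_prod_eq_sum] at h
end

namespace Asymptotics

variable {α 𝕜 : Type*} [NormedField 𝕜] {l : Filter α}

theorem isLittleO_iff_eq_zero_of_sub_isLittleO {f g : α → 𝕜} {c : 𝕜}
    (h : (fun x => f x - c * g x) =o[l] g) (hg : ∃ᶠ x in l, g x ≠ 0) : f =o[l] g ↔ c = 0 := by
  rw [h.congr_of_sub]
  refine ⟨fun hc => ?_, fun hc => by simp [hc]⟩
  by_contra hc0
  exact isLittleO_irrefl hg ((isLittleO_const_mul_left_iff hc0).1 hc)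

theorem IsLittleO.mul_sub_mul {f g u v : α → 𝕜} {c d : 𝕜}
    (hf : (fun x => f x - c * u x) =o[l] u) (hg : (fun x => g x - d * v x) =o[l] v) :
    (fun x => f x * g x - c * d * (u x * v x)) =o[l] fun x => u x * v x := by
  have hgv : g =O[l] v :=
    (hg.isBigO.add ((isBigO_refl v l).const_mul_left d)).congr_left fun x => by ring
  exact (hf.mul_isBigO hgv).add (((isBigO_refl u l).const_mul_left c).mul_isLittleO hg)
    |>.congr_left fun x => by ring

theorem isLittleO_sum_mul_sub {ι : Type*} {s : Finset ι} {f g : ι → α → 𝕜} {c d : ι → 𝕜}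
    {u v : α → 𝕜} (hf : ∀ i ∈ s, (fun x => f i x - c i * u x) =o[l] u)
    (hg : ∀ i ∈ s, (fun x => g i x - d i * v x) =o[l] v) :
    (fun x => ∑ i ∈ s, f i x * g i x - (∑ i ∈ s, c i * d i) * (u x * v x))
      =o[l] fun x => u x * v x := by
  refine (IsLittleO.sum fun i hi => (hf i hi).mul_sub_mul (hg i hi)).congr_left fun x => ?_
  rw [Finset.sum_apply, Finset.sum_sub_distrib, Finset.sum_mul]

end Asymptotics

theorem isLittleO_sum_mul_deriv_mul_fderiv_iff {𝕜 ι α : Type*} [NontriviallyNormedField 𝕜]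
    [CharZero 𝕜] [CompleteSpace 𝕜] [Fintype ι] [DecidableEq ι] [Norm α]
    {F : (ι → 𝕜) × 𝕜 → 𝕜} {γ : 𝕜 → (ι → 𝕜) × 𝕜} {g : 𝕜 → α}
    (hF : ∀ᶠ s in 𝓝 0, DifferentiableAt 𝕜 F (γ s)) (hγ : AnalyticAt 𝕜 γ 0) (hγ0 : (γ 0).2 = 0)
    (hFγ : ∀ᶠ s in 𝓝 0, F (γ s) = 0) :
    ((fun s => ∑ i, s * deriv (fun z => (γ z).1 i) s * fderiv 𝕜 F (γ s) (Pi.single i 1, 0))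
      =o[𝓝 0] g) ↔ (fun s => (γ s).2 * fderiv 𝕜 F (γ s) (0, 1)) =o[𝓝 0] g := by
  have heuler : (fun s => ∑ i, s * deriv (fun z => (γ z).1 i) s
      * fderiv 𝕜 F (γ s) (Pi.single i 1, 0)) =ᶠ[𝓝 0]
      fun s => -(s * deriv (fun z => (γ z).2) s * fderiv 𝕜 F (γ s) (0, 1)) := by
    filter_upwards [hF, hFγ.eventually_nhds, hγ.eventually_analyticAt] with s hFs hs hγs
    have h := sum_deriv_smul_fderiv_add_eq_zero hFs hγs.differentiableAt hs
    simp only [smul_eq_mul] at h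
    simp only [mul_assoc, ← Finset.mul_sum]
    linear_combination s * h
  have htheta : (fun s => s * deriv (fun z => (γ z).2) s * fderiv 𝕜 F (γ s) (0, 1))
      =Θ[𝓝 0] fun s => (γ s).2 * fderiv 𝕜 F (γ s) (0, 1) :=
    ((analyticAt_snd.comp hγ).smul_deriv_isTheta hγ0).mul isTheta_rfl
  rw [isLittleO_congr heuler EventuallyEq.rfl, isLittleO_neg_left, htheta.isLittleO_congr_left]

theorem briancon_speder_lemma_general
    (n : ℕ) (F : (Fin n → ℂ) × ℂ → ℂ)
    (hF : AnalyticOnNhd ℂ F Set.univ)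
    (γ : ℂ → (Fin n → ℂ) × ℂ)
    (hγ : AnalyticAt ℂ γ 0) (hγ0 : γ 0 = 0)
    (hFγ : ∀ᶠ s in nhds (0 : ℂ), F (γ s) = 0)
    (a b : ℕ) (A B : Fin n → ℂ) (hA : A ≠ 0)
    (hx : (fun s : ℂ => (γ s).1 - fun i => A i * s ^ a) =o[nhds 0] fun s => s ^ a)
    (hgrad : (fun s : ℂ =>
        (fun i => fderiv ℂ F (γ s) (Pi.single i 1, 0)) - fun i => B i * s ^ b)
        =o[nhds 0] fun s => s ^ b) :
    ((fun s : ℂ => ∑ i, (γ s).1 i * fderiv ℂ F (γ s) (Pi.single i 1, 0))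
        =o[nhds 0] fun s => s ^ (a + b)) ↔
    ((fun s : ℂ => (γ s).2 * fderiv ℂ F (γ s) (0, 1))
        =o[nhds 0] fun s => s ^ (a + b)) := by
  have hxi (i : Fin n) : (fun s => (γ s).1 i - A i * s ^ a) =o[𝓝 0] fun s => s ^ a :=
    isLittleO_pi.1 hx i
  have hgi (i : Fin n) :
      (fun s => fderiv ℂ F (γ s) (Pi.single i 1, 0) - B i * s ^ b) =o[𝓝 0] fun s => s ^ b :=
    isLittleO_pi.1 hgrad i
  have ha : a ≠ 0 := by
    rintro rfl
    refine hA (funext fun i => ?_)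
    simpa [hγ0] using isLittleO_pure.1 ((hxi i).mono (pure_le_nhds 0))
  have hxi' (i : Fin n) : (fun s => s * deriv (fun z => (γ z).1 i) s - (a * A i) * s ^ a)
      =o[𝓝 0] fun s => s ^ a := by
    have hxA : AnalyticAt ℂ (fun s => (γ s).1 i) 0 :=
      analyticAt_pi_iff.1 (analyticAt_fst.comp hγ) i
    simpa [mul_comm, mul_left_comm] using
      hxA.smul_deriv_sub_isLittleO ((hxi i).congr_left fun s => by simp [mul_comm])
  have hfreq : ∃ᶠ s in 𝓝 (0 : ℂ), s ^ (a + b) ≠ 0 :=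
    ((eventually_mem_nhdsWithin (s := {(0 : ℂ)}ᶜ)).frequently.filter_mono
      nhdsWithin_le_nhds).mono fun s hs => pow_ne_zero _ hs
  have hpair : (fun s => ∑ i, (γ s).1 i * fderiv ℂ F (γ s) (Pi.single i 1, 0)
      - (∑ i, A i * B i) * s ^ (a + b)) =o[𝓝 0] fun s => s ^ (a + b) := by
    simpa only [← pow_add] using isLittleO_sum_mul_sub (fun i _ => hxi i) (fun i _ => hgi i)
  have hpair' : (fun s => ∑ i, s * deriv (fun z => (γ z).1 i) s
      * fderiv ℂ F (γ s) (Pi.single i 1, 0) - (∑ i, a * A i * B i) * s ^ (a + b))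
      =o[𝓝 0] fun s => s ^ (a + b) := by
    simpa only [← pow_add] using isLittleO_sum_mul_sub (fun i _ => hxi' i) (fun i _ => hgi i)
  calc _ ↔ ∑ i, A i * B i = 0 := isLittleO_iff_eq_zero_of_sub_isLittleO hpair hfreq
    _ ↔ ∑ i, a * A i * B i = 0 := by simp [mul_assoc, ← Finset.mul_sum, ha]
    _ ↔ _ := (isLittleO_iff_eq_zero_of_sub_isLittleO hpair' hfreq).symm
    _ ↔ _ := isLittleO_sum_mul_deriv_mul_fderiv_iff
      (.of_forall fun s => (hF _ trivial).differentiableAt) hγ (by simp [hγ0]) hFγ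

/-- Briançon–Speder's lemma.  With `F` analytic, `F∘γ ≡ 0`,
`x(s) = A s^a + o(s^a)`, `(∂F/∂xᵢ)∘γ(s) = B s^b + o(s^b)` with `A, B ≠ 0`:
the condition `ν(Σᵢ xᵢ·(∂F/∂xᵢ)∘γ) > a + b` holds if and only if
`ν(t·(∂F/∂t)∘γ) > a + b`; i.e. `(b^π)` along the arc is equivalent to
`ν(t) + ν(∂F/∂t∘γ) > ν(x) + ν(J_x F∘γ)`. -/
theorem briancon_speder_lemma
    (n : ℕ) (F : (Fin n → ℂ) × ℂ → ℂ)
    (hF : AnalyticOnNhd ℂ F Set.univ)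
    (hF0 : ∀ t : ℂ, F (0, t) = 0)
    (γ : ℂ → (Fin n → ℂ) × ℂ)
    (hγ : AnalyticAt ℂ γ 0) (hγ0 : γ 0 = 0)
    (hFγ : ∀ᶠ s in nhds (0 : ℂ), F (γ s) = 0)
    (a b : ℕ) (A B : Fin n → ℂ) (hA : A ≠ 0) (hB : B ≠ 0)
    (hx : (fun s : ℂ => (γ s).1 - fun i => A i * s ^ a) =o[nhds 0] fun s => s ^ a)
    (hgrad : (fun s : ℂ =>
        (fun i => fderiv ℂ F (γ s) (Pi.single i 1, 0)) - fun i => B i * s ^ b)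
        =o[nhds 0] fun s => s ^ b) :
    ((fun s : ℂ => ∑ i, (γ s).1 i * fderiv ℂ F (γ s) (Pi.single i 1, 0))
        =o[nhds 0] fun s => s ^ (a + b)) ↔
    ((fun s : ℂ => (γ s).2 * fderiv ℂ F (γ s) (0, 1))
        =o[nhds 0] fun s => s ^ (a + b)) :=
  briancon_speder_lemma_general n F hF γ hγ hγ0 hFγ a b A B hA hx hgrad
end

section
/- Let F(x,y,z,t) = x⁵ + txy⁶ + y⁷z + z¹⁵ and let γ be an analytic arc in F⁻¹(0) through 0 along which Whitney's condition (b^π) fails. Then, with ν the vanishing order at s = 0 along γ, the valuations satisfy: ν(x) > ν(y) = ν(z) > ν(t), ν(x) + ν(t) = ν(y) + ν(z), and 4ν(x) = ν(t) + 6ν(y). Consequently ν(x) : ν(y) : ν(z) : ν(t) = 8 : 5 : 5 : 2. -/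
/-!
The order of vanishing along the arc is a valuation, so whenever three analytic functions sum to
zero along `γ` the minimum of their orders is attained at least twice; the same holds for a
binomial `f + g` together with `-(f + g)`. `F` is weighted homogeneous of degree 15 for the
weights `(3, 2, 1, 0)`, so the Euler relation `3x·F_x + 2y·F_y + z·F_z = 15F` vanishes along `γ`.
Failure of `(b^π)` bounds each `ν(∂F/∂x_i ∘ γ)` from below by `ν(t) + ν(x) + 6ν(y) - ν(X)`; this
forces the two monomials of `F_x` to have the same order, and the tropical conditions coming from
`F_y`, `F_z` and the Euler relation then leave only `ν(y) = ν(z)` and `ν(x) + ν(t) = 2ν(y)`.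
-/

open Filter Topology

/-- `f` has vanishing order exactly `k` at `0`: `f(s) = s^k·u(s)` with `u`
analytic at `0` and `u(0) ≠ 0`. -/
def HasVanishingOrder (f : ℂ → ℂ) (k : ℕ) : Prop :=
  ∃ u : ℂ → ℂ, AnalyticAt ℂ u 0 ∧ u 0 ≠ 0 ∧ ∀ᶠ s in nhds (0 : ℂ), f s = s ^ k * u s

def MinAttainedTwice (a b c : ℕ) : Prop := min b c ≤ a ∧ min a c ≤ b ∧ min a b ≤ c

namespace HasVanishingOrder

variable {f g h : ℂ → ℂ} {k p q r : ℕ}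

theorem analyticAt (hf : HasVanishingOrder f k) : AnalyticAt ℂ f 0 := by
  obtain ⟨u, hu, -, hfu⟩ := hf
  exact ((analyticAt_id.pow k).mul hu).congr (hfu.mono fun s hs => hs.symm)

theorem analyticOrderAt_eq (hf : HasVanishingOrder f k) : analyticOrderAt f 0 = k := by
  refine hf.analyticAt.analyticOrderAt_eq_natCast.mpr ?_
  obtain ⟨u, hu, hu0, hfu⟩ := hf
  exact ⟨u, hu, hu0, by simpa using hfu⟩

theorem of_analyticOrderAt_eq (hf : AnalyticAt ℂ f 0) (hk : analyticOrderAt f 0 = k) :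
    HasVanishingOrder f k := by
  obtain ⟨u, hu, hu0, hfu⟩ := hf.analyticOrderAt_eq_natCast.mp hk
  exact ⟨u, hu, hu0, by simpa using hfu⟩

theorem unique (hp : HasVanishingOrder f p) (hq : HasVanishingOrder f q) : p = q := by
  exact_mod_cast hp.analyticOrderAt_eq.symm.trans hq.analyticOrderAt_eq

theorem mul (hf : HasVanishingOrder f p) (hg : HasVanishingOrder g q) :
    HasVanishingOrder (fun s => f s * g s) (p + q) :=
  of_analyticOrderAt_eq (hf.analyticAt.mul hg.analyticAt) <| by
    rw [show (fun s => f s * g s) = f * g from rfl,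
      analyticOrderAt_mul hf.analyticAt hg.analyticAt, hf.analyticOrderAt_eq,
      hg.analyticOrderAt_eq, Nat.cast_add]

theorem pow (hf : HasVanishingOrder f p) (n : ℕ) :
    HasVanishingOrder (fun s => f s ^ n) (n * p) :=
  of_analyticOrderAt_eq (hf.analyticAt.pow n) <| by
    rw [show (fun s => f s ^ n) = f ^ n from rfl, analyticOrderAt_pow hf.analyticAt,
      hf.analyticOrderAt_eq, nsmul_eq_mul, Nat.cast_mul]

theorem const_mul (hf : HasVanishingOrder f p) {c : ℂ} (hc : c ≠ 0) :
    HasVanishingOrder (fun s => c * f s) p := by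
  simpa using (of_analyticOrderAt_eq (analyticAt_const (v := c))
    ((analyticAt_const.analyticOrderAt_eq_zero).mpr hc)).mul hf

theorem neg (hf : HasVanishingOrder f p) : HasVanishingOrder (fun s => -f s) p := by
  simpa using hf.const_mul (neg_ne_zero.mpr one_ne_zero)

theorem min_le_of_add_add_eq_zero (hf : HasVanishingOrder f p) (hg : HasVanishingOrder g q)
    (hh : HasVanishingOrder h r) (hsum : ∀ᶠ s in 𝓝 0, f s + g s + h s = 0) :
    min q r ≤ p := by
  have hfgh : f =ᶠ[𝓝 0] -(g + h) := hsum.mono fun s hs => by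
    simp only [Pi.neg_apply, Pi.add_apply]; linear_combination hs
  have : ((min q r : ℕ) : ℕ∞) ≤ p :=
    calc ((min q r : ℕ) : ℕ∞) = min (analyticOrderAt g 0) (analyticOrderAt h 0) := by
          rw [Nat.mono_cast.map_min, hg.analyticOrderAt_eq, hh.analyticOrderAt_eq]
      _ ≤ analyticOrderAt (g + h) 0 := le_analyticOrderAt_add
      _ = analyticOrderAt f 0 := by rw [analyticOrderAt_congr hfgh, analyticOrderAt_neg]
      _ = p := hf.analyticOrderAt_eq
  exact_mod_cast this

theorem minAttainedTwice (hf : HasVanishingOrder f p) (hg : HasVanishingOrder g q)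
    (hh : HasVanishingOrder h r) (hsum : ∀ᶠ s in 𝓝 0, f s + g s + h s = 0) :
    MinAttainedTwice p q r :=
  ⟨hf.min_le_of_add_add_eq_zero hg hh hsum,
    hg.min_le_of_add_add_eq_zero hf hh (hsum.mono fun s hs => by linear_combination hs),
    hh.min_le_of_add_add_eq_zero hf hg (hsum.mono fun s hs => by linear_combination hs)⟩

theorem minAttainedTwice_of_add (hf : HasVanishingOrder f p) (hg : HasVanishingOrder g q)
    (hfg : HasVanishingOrder (fun s => f s + g s) r) : MinAttainedTwice p q r :=
  hf.minAttainedTwice hg hfg.neg (Eventually.of_forall fun _ => add_neg_cancel _)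

end HasVanishingOrder

theorem briancon_speder_orders_of_minAttainedTwice {νx νy νz νt νFx νFy νFz : ℕ}
    (hνt : 1 ≤ νt)
    (hEuler : MinAttainedTwice (νx + νFx) (νy + νFy) (νz + νFz))
    (hFx : MinAttainedTwice (4 * νx) (νt + 6 * νy) νFx)
    (hFy : MinAttainedTwice (νt + νx + 5 * νy) (6 * νy + νz) νFy)
    (hFz : MinAttainedTwice (7 * νy) (14 * νz) νFz)
    (hfail : νt + (νx + 6 * νy) ≤ min νx (min νy νz) + min νFx (min νFy νFz)) :
    νx > νy ∧ νy = νz ∧ νz > νt ∧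
    νx + νt = νy + νz ∧ 4 * νx = νt + 6 * νy ∧
    ∃ m : ℕ, νx = 8 * m ∧ νy = 5 * m ∧ νz = 5 * m ∧ νt = 2 * m := by
  unfold MinAttainedTwice at hEuler hFx hFy hFz
  have hx : 4 * νx = νt + 6 * νy := by omega
  have hyz : νy = νz := by omega
  have hxt : νx + νt = νy + νz := by omega
  exact ⟨by omega, hyz, by omega, hxt, hx, 2 * νx - 3 * νy, by omega, by omega, by omega, by omega⟩

theorem briancon_speder_bpi_failure_valuations_general
    (x y z t : ℂ → ℂ)
    (hFγ : ∀ᶠ s in nhds (0 : ℂ),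
      (x s) ^ 5 + t s * x s * (y s) ^ 6 + (y s) ^ 7 * z s + (z s) ^ 15 = 0)
    (νx νy νz νt νdt νdx νdy νdz : ℕ)
    (hνx : HasVanishingOrder x νx) (hνy : HasVanishingOrder y νy)
    (hνz : HasVanishingOrder z νz) (hνt : HasVanishingOrder t νt)
    (h1t : 1 ≤ νt)
    (hνdt : HasVanishingOrder (fun s => x s * (y s) ^ 6) νdt)
    (hνdx : HasVanishingOrder (fun s => 5 * (x s) ^ 4 + t s * (y s) ^ 6) νdx)
    (hνdy : HasVanishingOrder (fun s => 6 * t s * x s * (y s) ^ 5 + 7 * (y s) ^ 6 * z s) νdy)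
    (hνdz : HasVanishingOrder (fun s => (y s) ^ 7 + 15 * (z s) ^ 14) νdz)
    (hfail : νt + νdt ≤ min νx (min νy νz) + min νdx (min νdy νdz)) :
    νx > νy ∧ νy = νz ∧ νz > νt ∧
    νx + νt = νy + νz ∧ 4 * νx = νt + 6 * νy ∧
    ∃ m : ℕ, νx = 8 * m ∧ νy = 5 * m ∧ νz = 5 * m ∧ νt = 2 * m := by
  have hdt : νdt = νx + 6 * νy := hνdt.unique (hνx.mul (hνy.pow 6))
  have hEuler : MinAttainedTwice (νx + νdx) (νy + νdy) (νz + νdz) :=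
    ((hνx.const_mul three_ne_zero).mul hνdx).minAttainedTwice
      ((hνy.const_mul two_ne_zero).mul hνdy) (hνz.mul hνdz)
      (hFγ.mono fun s hs => by linear_combination 15 * hs)
  have hFx : MinAttainedTwice (4 * νx) (νt + 6 * νy) νdx :=
    ((hνx.pow 4).const_mul (by norm_num)).minAttainedTwice_of_add (hνt.mul (hνy.pow 6)) hνdx
  have hFy : MinAttainedTwice (νt + νx + 5 * νy) (6 * νy + νz) νdy :=
    (((hνt.const_mul (by norm_num)).mul hνx).mul (hνy.pow 5)).minAttainedTwice_of_add
      (((hνy.pow 6).const_mul (by norm_num)).mul hνz) hνdy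
  have hFz : MinAttainedTwice (7 * νy) (14 * νz) νdz :=
    (hνy.pow 7).minAttainedTwice_of_add ((hνz.pow 14).const_mul (by norm_num)) hνdz
  exact briancon_speder_orders_of_minAttainedTwice h1t hEuler hFx hFy hFz (hdt ▸ hfail)

/-- For `F(x,y,z,t) = x⁵ + txy⁶ + y⁷z + z¹⁵`, let `γ = (x,y,z,t)` be an
analytic arc in `F⁻¹(0)` through `0` along which Whitney's condition `(b^π)`
fails, i.e. `ν(t) + ν(∂F/∂t∘γ) ≤ min(ν(x),ν(y),ν(z)) + ν(J_X F∘γ)` where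
`∂F/∂t = xy⁶`.  Then `ν(x) > ν(y) = ν(z) > ν(t)`,
`ν(x) + ν(t) = ν(y) + ν(z)` and `4ν(x) = ν(t) + 6ν(y)`; consequently
`ν(x) : ν(y) : ν(z) : ν(t) = 8 : 5 : 5 : 2`. -/
theorem briancon_speder_bpi_failure_valuations
    (x y z t : ℂ → ℂ)
    (hxa : AnalyticAt ℂ x 0) (hya : AnalyticAt ℂ y 0)
    (hza : AnalyticAt ℂ z 0) (hta : AnalyticAt ℂ t 0)
    (hFγ : ∀ᶠ s in nhds (0 : ℂ),
      (x s) ^ 5 + t s * x s * (y s) ^ 6 + (y s) ^ 7 * z s + (z s) ^ 15 = 0)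
    (νx νy νz νt νdt νdx νdy νdz : ℕ)
    (hνx : HasVanishingOrder x νx) (hνy : HasVanishingOrder y νy)
    (hνz : HasVanishingOrder z νz) (hνt : HasVanishingOrder t νt)
    (h1x : 1 ≤ νx) (h1y : 1 ≤ νy) (h1z : 1 ≤ νz) (h1t : 1 ≤ νt)
    (hνdt : HasVanishingOrder (fun s => x s * (y s) ^ 6) νdt)
    (hνdx : HasVanishingOrder (fun s => 5 * (x s) ^ 4 + t s * (y s) ^ 6) νdx)
    (hνdy : HasVanishingOrder (fun s => 6 * t s * x s * (y s) ^ 5 + 7 * (y s) ^ 6 * z s) νdy)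
    (hνdz : HasVanishingOrder (fun s => (y s) ^ 7 + 15 * (z s) ^ 14) νdz)
    (hfail : νt + νdt ≤ min νx (min νy νz) + min νdx (min νdy νdz)) :
    νx > νy ∧ νy = νz ∧ νz > νt ∧
    νx + νt = νy + νz ∧ 4 * νx = νt + 6 * νy ∧
    ∃ m : ℕ, νx = 8 * m ∧ νy = 5 * m ∧ νz = 5 * m ∧ νt = 2 * m :=
  briancon_speder_bpi_failure_valuations_general x y z t hFγ νx νy νz νt νdt νdx νdy νdz hνx hνy hνz
    hνt h1t hνdt hνdx hνdy hνdz hfail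
end

section
/- Let V = {(x,y,t) ∈ ℝ³ : y⁶ = t⁶x² + x⁶}, Y the t-axis, X = V \ Y. Then the pair (X,Y) fails Whitney's condition (b) at the origin: there is a sequence of points pₙ ∈ X converging to 0 such that the secant lines from pₙ to its projection (0,0,tₙ) on Y and the tangent planes T_{pₙ}X converge, but the limit line is not contained in the limit plane. -/
/-!
Take `c = 2^(1/6)` and the curve `γ(s) = (s³, c s³, s²)`, which lies in `V` since
`(c s³)⁶ = 2 s¹⁸ = (s²)⁶ (s³)² + (s³)⁶`. The secant from `γ(s)` to `(0,0,s²)` is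
`s³ (1, c, 0)`, a constant direction, while the gradient of `g` at `γ(s)` is
`s¹⁵ (-8, 6c⁵, -6s)`, whose direction tends to that of `(-8, 6c⁵, 0)`. The two limits
have inner product `-8 + 6c⁶ = 4 ≠ 0`.
-/

open Filter Topology RealInnerProductSpace NormedSpace

local notation "ℝ³" => EuclideanSpace ℝ (Fin 3)

lemma Filter.Tendsto.normalize {α V : Type*} [NormedAddCommGroup V] [NormedSpace ℝ V]
    {l : Filter α} {f : α → V} {x : V} (hf : Tendsto f l (𝓝 x)) (hx : x ≠ 0) :
    Tendsto (fun a => normalize (f a)) l (𝓝 (normalize x)) :=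
  (hf.norm.inv₀ (norm_ne_zero_iff.mpr hx)).smul hf

def whitneyPoly (q : ℝ³) : ℝ := q 1 ^ 6 - q 2 ^ 6 * q 0 ^ 2 - q 0 ^ 6

lemma hasGradientAt_whitneyPoly (p : ℝ³) :
    HasGradientAt whitneyPoly
      !₂[-(2 * p 2 ^ 6 * p 0 + 6 * p 0 ^ 5), 6 * p 1 ^ 5, -(6 * p 2 ^ 5 * p 0 ^ 2)] p := by
  have hx := PiLp.hasFDerivAt_apply (𝕜 := ℝ) 2 p 0
  have hy := PiLp.hasFDerivAt_apply (𝕜 := ℝ) 2 p 1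
  have ht := PiLp.hasFDerivAt_apply (𝕜 := ℝ) 2 p 2
  rw [hasGradientAt_iff_hasFDerivAt]
  refine ((hy.pow 6).sub ((ht.pow 6).mul (hx.pow 2)) |>.sub (hx.pow 6)).congr_fderiv ?_
  ext v
  simp [PiLp.inner_apply, Fin.sum_univ_three]
  ring

namespace WhitneyCurve

variable (c : ℝ)

def curve (s : ℝ) : ℝ³ := !₂[s ^ 3, c * s ^ 3, s ^ 2]

def secantDir : ℝ³ := !₂[1, c, 0]

def normalDir (s : ℝ) : ℝ³ := !₂[-8, 6 * c ^ 5, -6 * s]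

lemma continuous_curve : Continuous (curve c) := by
  unfold curve
  fun_prop

lemma curve_zero : curve c 0 = 0 := by
  ext i
  fin_cases i <;> simp [curve]

lemma curve_mem (hc : c ^ 6 = 2) (s : ℝ) :
    curve c s 1 ^ 6 = curve c s 2 ^ 6 * curve c s 0 ^ 2 + curve c s 0 ^ 6 := by
  simp only [curve, PiLp.toLp_apply, Matrix.cons_val]
  linear_combination s ^ 18 * hc

lemma curve_sub_axis (s : ℝ) :
    curve c s - WithLp.toLp 2 (fun i => if i = 2 then curve c s 2 else 0) =
      s ^ 3 • secantDir c := by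
  ext i
  fin_cases i <;> simp [curve, secantDir, mul_comm]

lemma gradient_whitneyPoly_curve (s : ℝ) :
    gradient whitneyPoly (curve c s) = s ^ 15 • normalDir c s := by
  rw [(hasGradientAt_whitneyPoly _).gradient]
  ext i
  fin_cases i <;> simp [curve, normalDir] <;> ring

lemma secantDir_ne_zero : secantDir c ≠ 0 := fun h => by
  simpa [secantDir] using congr_arg (· 0) h

lemma normalDir_ne_zero (s : ℝ) : normalDir c s ≠ 0 := fun h => by
  simpa [normalDir] using congr_arg (· 0) h

lemma continuous_normalDir : Continuous (normalDir c) := by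
  unfold normalDir
  fun_prop

lemma inner_secantDir_normalDir_zero (hc : c ^ 6 = 2) : ⟪secantDir c, normalDir c 0⟫ = 4 := by
  simp [secantDir, normalDir, PiLp.inner_apply, Fin.sum_univ_three]
  linear_combination 6 * hc

end WhitneyCurve

open WhitneyCurve

/-- Let `V = {(x,y,t) ∈ ℝ³ : y⁶ = t⁶x² + x⁶}`, `Y` the `t`-axis and
`X = V \ Y`.  The pair `(X,Y)` fails Whitney's condition (b) at the origin:
there is a sequence `pₙ ∈ X` tending to `0` such that the secant directions
from `pₙ` to its projection `(0,0,tₙ)` on `Y` converge to a unit vector `ℓ`,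
the unit normals of `X` at `pₙ` (directing the tangent planes
`T_{pₙ}X = N^⊥`, where `N` is the normalised gradient of
`g(x,y,t) = y⁶ - t⁶x² - x⁶`) converge to a unit vector `N`, and `⟪ℓ,N⟫ ≠ 0`,
so the limit secant line is not contained in the limit tangent plane. -/
theorem weakly_whitney_example_fails_b
    (V Y X : Set (EuclideanSpace ℝ (Fin 3)))
    (hV : V = {p | p 1 ^ 6 = p 2 ^ 6 * p 0 ^ 2 + p 0 ^ 6})
    (hY : Y = {p | p 0 = 0 ∧ p 1 = 0})
    (hX : X = V \ Y)
    (g : EuclideanSpace ℝ (Fin 3) → ℝ)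
    (hg : ∀ p, g p = p 1 ^ 6 - p 2 ^ 6 * p 0 ^ 2 - p 0 ^ 6) :
    ∃ p : ℕ → EuclideanSpace ℝ (Fin 3), ∃ q : ℕ → EuclideanSpace ℝ (Fin 3),
      (∀ n, p n ∈ X) ∧ (∀ n, q n ∈ Y) ∧
      (∀ n, q n = WithLp.toLp 2 (fun i => if i = 2 then p n 2 else 0)) ∧
      Tendsto p atTop (nhds 0) ∧
      (∀ n, gradient g (p n) ≠ 0) ∧
      ∃ ℓ N : EuclideanSpace ℝ (Fin 3),
        ‖ℓ‖ = 1 ∧ ‖N‖ = 1 ∧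
        Tendsto (fun n => ‖p n - q n‖⁻¹ • (p n - q n)) atTop (nhds ℓ) ∧
        Tendsto (fun n => ‖gradient g (p n)‖⁻¹ • gradient g (p n)) atTop (nhds N) ∧
        ⟪ℓ, N⟫ ≠ 0 := by
  subst hV hY hX
  obtain rfl : g = whitneyPoly := funext hg
  set c : ℝ := 2 ^ ((6 : ℕ) : ℝ)⁻¹
  have hc : c ^ 6 = 2 := Real.rpow_inv_natCast_pow (by norm_num) (by norm_num)
  set u : ℕ → ℝ := fun n => 1 / (n + 1)
  have hu_pos (n : ℕ) : 0 < u n := by positivity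
  have hu : Tendsto u atTop (𝓝 0) := tendsto_one_div_add_atTop_nhds_zero_nat
  refine ⟨fun n => curve c (u n),
    fun n => WithLp.toLp 2 (fun i => if i = 2 then curve c (u n) 2 else 0),
    fun n => ⟨curve_mem c hc _, by simp [curve, (hu_pos n).ne']⟩, fun n => by simp,
    fun n => rfl, ?_, fun n => ?_, normalize (secantDir c), normalize (normalDir c 0),
    norm_normalize (secantDir_ne_zero c), norm_normalize (normalDir_ne_zero c 0), ?_, ?_, ?_⟩
  · exact (curve_zero c ▸ (continuous_curve c).tendsto 0).comp hu
  · rw [gradient_whitneyPoly_curve]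
    exact smul_ne_zero (pow_ne_zero _ (hu_pos n).ne') (normalDir_ne_zero c _)
  · refine tendsto_const_nhds.congr fun n => ?_
    rw [curve_sub_axis]
    exact (normalize_smul_of_pos (pow_pos (hu_pos n) 3) _).symm
  · simp_rw [gradient_whitneyPoly_curve]
    refine ((((continuous_normalDir c).tendsto 0).comp hu).normalize
      (normalDir_ne_zero c 0)).congr fun n => ?_
    exact (normalize_smul_of_pos (pow_pos (hu_pos n) 15) _).symm
  · simp [NormedSpace.normalize, real_inner_smul_left, real_inner_smul_right,
      inner_secantDir_normalDir_zero c hc, secantDir_ne_zero, normalDir_ne_zero]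
end

section
/- Suppose submanifolds X, Y of ℝⁿ with y ∈ Y ∩ closure(X) satisfy condition (a) at y (limits of tangent planes of X contain T_yY) and condition (δ^π) at y with constant δ < 1 (for the projection π of a tubular neighborhood of Y: limits ℓ of normalized secants x - π(x) and limits τ of T_xX satisfy sin θ(ℓ, τ) ≤ δ). Then (X,Y) satisfies condition (δ) at y with the same constant δ: for all sequences xᵢ ∈ X, yᵢ ∈ Y converging to y with secant directions converging to ℓ and tangent planes converging to τ, sin θ(ℓ, τ) ≤ δ. -/
/-!
Write `ℓ = ℓ₁ + ℓ₂` with `ℓ₁ ∈ T_yY` and `ℓ₂ ⊥ T_yY`. Since `π` is strictly differentiable at `y`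
with derivative the projection onto `T_yY` and fixes `yᵢ ∈ Y`, `xᵢ - π xᵢ` differs from the
component of `xᵢ - yᵢ` normal to `T_yY` by `o(‖xᵢ - yᵢ‖)`, so `(xᵢ - π xᵢ) / ‖xᵢ - yᵢ‖ → ℓ₂`. When
`ℓ₂ ≠ 0` the normalized vectors `(xᵢ - π xᵢ) / ‖xᵢ - π xᵢ‖` therefore tend to `ℓ₂ / ‖ℓ₂‖`, and
condition `(δ^π)` gives `sin θ(ℓ₂, τ) ≤ δ`. By condition (a), `ℓ₁ ∈ T_yY ⊆ τ`, hence
`‖π_{τ⊥} ℓ‖ = ‖π_{τ⊥} ℓ₂‖ ≤ δ ‖ℓ₂‖ ≤ δ ‖ℓ‖`.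
-/

open Filter

noncomputable section

variable {n : ℕ}

/-- Sine of the angle between a vector `v` and a subspace `τ`:
`sin θ(v,τ) = ‖π_{τ⊥}(v)‖/‖v‖`. -/
def sinAngle (v : EuclideanSpace ℝ (Fin n)) (τ : Submodule ℝ (EuclideanSpace ℝ (Fin n))) : ℝ :=
  ‖v - (Submodule.orthogonalProjection τ v : EuclideanSpace ℝ (Fin n))‖ / ‖v‖

/-- The orthogonal projection onto a subspace, as an endomorphism; convergence
of these operators encodes convergence of the (tangent) planes. -/
def projOp (τ : Submodule ℝ (EuclideanSpace ℝ (Fin n))) :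
    EuclideanSpace ℝ (Fin n) →L[ℝ] EuclideanSpace ℝ (Fin n) :=
  τ.subtypeL.comp (Submodule.orthogonalProjection τ)

open Topology

section Secants

variable {ι E F : Type*} [NormedAddCommGroup E] [NormedSpace ℝ E]
  [NormedAddCommGroup F] [NormedSpace ℝ F] {l : Filter ι}

theorem tendsto_inv_norm_smul_of_isLittleO_sub {f : ι → F} {c : ι → E} {L : E →L[ℝ] F} {ℓ : E}
    (h : (fun i => f i - L (c i)) =o[l] c) (hc : Tendsto (fun i => ‖c i‖⁻¹ • c i) l (𝓝 ℓ)) :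
    Tendsto (fun i => ‖c i‖⁻¹ • f i) l (𝓝 (L ℓ)) := by
  have h₀ : Tendsto (fun i => ‖c i‖⁻¹ • (f i - L (c i))) l (𝓝 0) :=
    h.norm_right.tendsto_inv_smul_nhds_zero.congr fun i => by simp
  simpa [smul_sub] using h₀.add ((L.continuous.tendsto ℓ).comp hc)

theorem tendsto_inv_norm_smul_of_tendsto_smul {c : ι → ℝ} {w : ι → E} {m : E}
    (hc : ∀ i, 0 ≤ c i) (h : Tendsto (fun i => c i • w i) l (𝓝 m)) (hm : m ≠ 0) :
    Tendsto (fun i => ‖w i‖⁻¹ • w i) l (𝓝 (‖m‖⁻¹ • m)) := by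
  refine ((h.norm.inv₀ (norm_ne_zero_iff.mpr hm)).smul h).congr' ?_
  filter_upwards [h.eventually_ne hm] with i hi
  have hci : 0 < c i := (hc i).lt_of_ne' (left_ne_zero_of_smul hi)
  rw [norm_smul, Real.norm_of_nonneg hci.le, smul_smul]
  congr 1
  field_simp

theorem tendsto_inv_norm_smul_sub_of_hasStrictFDerivAt {π : E → E} {P : E →L[ℝ] E} {y ℓ : E}
    {Y : Set E} (hπ : HasStrictFDerivAt π P y) (hπY : ∀ z ∈ Y, π z = z)
    {x y' : ι → E} (hy'Y : ∀ i, y' i ∈ Y) (hx : Tendsto x l (𝓝 y)) (hy' : Tendsto y' l (𝓝 y))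
    (hℓ : Tendsto (fun i => ‖x i - y' i‖⁻¹ • (x i - y' i)) l (𝓝 ℓ)) :
    Tendsto (fun i => ‖x i - y' i‖⁻¹ • (x i - π (x i))) l (𝓝 (ℓ - P ℓ)) := by
  refine tendsto_inv_norm_smul_of_isLittleO_sub (L := .id ℝ E - P) ?_ hℓ
  refine (hπ.isLittleO.comp_tendsto (hx.prodMk_nhds hy')).neg_left.congr_left fun i => ?_
  simp only [Function.comp_apply, hπY _ (hy'Y i), sub_apply, ContinuousLinearMap.id_apply]
  abel

end Secants

section SinAngle

variable {τ σ : Submodule ℝ (EuclideanSpace ℝ (Fin n))} {v : EuclideanSpace ℝ (Fin n)}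
  {δ : ℝ}

theorem sinAngle_eq_norm_starProjection_orthogonal_div :
    sinAngle v τ = ‖τᗮ.starProjection v‖ / ‖v‖ := by
  rw [Submodule.starProjection_orthogonal_val]; rfl

@[simp]
theorem sinAngle_zero_left : sinAngle 0 τ = 0 := by simp [sinAngle]

theorem sinAngle_inv_norm_smul : sinAngle (‖v‖⁻¹ • v) τ = sinAngle v τ := by
  rcases eq_or_ne v 0 with rfl | hv
  · simp
  simp only [sinAngle_eq_norm_starProjection_orthogonal_div, map_smul, norm_smul, norm_inv,
    norm_norm]
  rw [mul_div_mul_left _ _ (inv_ne_zero (norm_ne_zero_iff.mpr hv))]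

theorem sinAngle_le_iff (hδ : 0 ≤ δ) :
    sinAngle v τ ≤ δ ↔ ‖τᗮ.starProjection v‖ ≤ δ * ‖v‖ := by
  rcases eq_or_ne v 0 with rfl | hv
  · simp [hδ]
  rw [sinAngle_eq_norm_starProjection_orthogonal_div, div_le_iff₀ (norm_pos_iff.mpr hv)]

theorem sinAngle_le_of_sinAngle_starProjection_orthogonal_le (hστ : σ ≤ τ) (hδ : 0 ≤ δ)
    (h : sinAngle (σᗮ.starProjection v) τ ≤ δ) : sinAngle v τ ≤ δ := by
  rw [sinAngle_le_iff hδ] at h ⊢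
  have hproj : τᗮ.starProjection (σᗮ.starProjection v) = τᗮ.starProjection v := by
    rw [← ContinuousLinearMap.comp_apply,
      Submodule.starProjection_comp_starProjection_of_le (Submodule.orthogonal_le hστ)]
  calc ‖τᗮ.starProjection v‖ ≤ δ * ‖σᗮ.starProjection v‖ := hproj ▸ h
    _ ≤ δ * ‖v‖ := by gcongr; exact σᗮ.norm_starProjection_apply_le v

end SinAngle

theorem delta_pi_and_a_implies_delta_general
    (X Y : Set (EuclideanSpace ℝ (Fin n))) (y : EuclideanSpace ℝ (Fin n))
    (TX : EuclideanSpace ℝ (Fin n) → Submodule ℝ (EuclideanSpace ℝ (Fin n)))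
    (TY : Submodule ℝ (EuclideanSpace ℝ (Fin n)))
    (π : EuclideanSpace ℝ (Fin n) → EuclideanSpace ℝ (Fin n))
    (hπC : ContDiff ℝ 1 π)
    (hπr : ∀ z ∈ Y, π z = z)
    (hdπ : fderiv ℝ π y = projOp TY)
    (δ : ℝ) (hδ0 : 0 ≤ δ)
    -- condition (a) at y :
    (ha : ∀ x : ℕ → EuclideanSpace ℝ (Fin n), (∀ i, x i ∈ X) →
      Tendsto x atTop (nhds y) →
      ∀ τ : Submodule ℝ (EuclideanSpace ℝ (Fin n)),
        Tendsto (fun i => projOp (TX (x i))) atTop (nhds (projOp τ)) → TY ≤ τ)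
    -- condition (δ^π) at y :
    (hδπ : ∀ x : ℕ → EuclideanSpace ℝ (Fin n), (∀ i, x i ∈ X) →
      Tendsto x atTop (nhds y) →
      ∀ (ℓ : EuclideanSpace ℝ (Fin n)) (τ : Submodule ℝ (EuclideanSpace ℝ (Fin n))),
        Tendsto (fun i => ‖x i - π (x i)‖⁻¹ • (x i - π (x i))) atTop (nhds ℓ) →
        Tendsto (fun i => projOp (TX (x i))) atTop (nhds (projOp τ)) →
        sinAngle ℓ τ ≤ δ) :
    -- condition (δ) at y :
    ∀ (x : ℕ → EuclideanSpace ℝ (Fin n)) (y' : ℕ → EuclideanSpace ℝ (Fin n)),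
      (∀ i, x i ∈ X) → (∀ i, y' i ∈ Y) →
      Tendsto x atTop (nhds y) → Tendsto y' atTop (nhds y) →
      ∀ (ℓ : EuclideanSpace ℝ (Fin n)) (τ : Submodule ℝ (EuclideanSpace ℝ (Fin n))),
        Tendsto (fun i => ‖x i - y' i‖⁻¹ • (x i - y' i)) atTop (nhds ℓ) →
        Tendsto (fun i => projOp (TX (x i))) atTop (nhds (projOp τ)) →
        sinAngle ℓ τ ≤ δ := by
  intro x y' hxX hy'Y hx hy' ℓ τ hℓ hτ
  have hstrict : HasStrictFDerivAt π (projOp TY) y :=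
    hdπ ▸ hπC.contDiffAt.hasStrictFDerivAt one_ne_zero
  have hnormal : Tendsto (fun i => ‖x i - y' i‖⁻¹ • (x i - π (x i))) atTop
      (𝓝 (TYᗮ.starProjection ℓ)) := by
    rw [Submodule.starProjection_orthogonal_val]
    exact tendsto_inv_norm_smul_sub_of_hasStrictFDerivAt hstrict hπr hy'Y hx hy' hℓ
  refine sinAngle_le_of_sinAngle_starProjection_orthogonal_le (ha x hxX hx τ hτ) hδ0 ?_
  rcases eq_or_ne (TYᗮ.starProjection ℓ) 0 with h0 | h0
  · rwa [h0, sinAngle_zero_left]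
  rw [← sinAngle_inv_norm_smul]
  exact hδπ x hxX hx _ τ
    (tendsto_inv_norm_smul_of_tendsto_smul (fun _ => inv_nonneg.mpr (norm_nonneg _)) hnormal h0) hτ

/-- Suppose the submanifolds `X, Y ⊆ ℝⁿ`, with `y ∈ Y ∩ cl(X)`, tangent planes
`TX x` for `x ∈ X` and `T_yY = TY`, and a `C¹` tubular-neighbourhood retraction
`π` onto `Y` (with `dπ_y` the orthogonal projection onto `TY`), satisfy
condition (a) at `y` and condition `(δ^π)` at `y` with constant `δ < 1`.
Then `(X,Y)` satisfies condition `(δ)` at `y` with the same constant `δ`. -/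
theorem delta_pi_and_a_implies_delta
    (X Y : Set (EuclideanSpace ℝ (Fin n))) (y : EuclideanSpace ℝ (Fin n))
    (hy : y ∈ Y) (hyc : y ∈ closure X)
    (TX : EuclideanSpace ℝ (Fin n) → Submodule ℝ (EuclideanSpace ℝ (Fin n)))
    (TY : Submodule ℝ (EuclideanSpace ℝ (Fin n)))
    (π : EuclideanSpace ℝ (Fin n) → EuclideanSpace ℝ (Fin n))
    (hπC : ContDiff ℝ 1 π)
    (hπY : ∀ z, π z ∈ Y)
    (hπr : ∀ z ∈ Y, π z = z)
    (hdπ : fderiv ℝ π y = projOp TY)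
    (δ : ℝ) (hδ0 : 0 ≤ δ) (hδ1 : δ < 1)
    -- condition (a) at y :
    (ha : ∀ x : ℕ → EuclideanSpace ℝ (Fin n), (∀ i, x i ∈ X) →
      Tendsto x atTop (nhds y) →
      ∀ τ : Submodule ℝ (EuclideanSpace ℝ (Fin n)),
        Tendsto (fun i => projOp (TX (x i))) atTop (nhds (projOp τ)) → TY ≤ τ)
    -- condition (δ^π) at y :
    (hδπ : ∀ x : ℕ → EuclideanSpace ℝ (Fin n), (∀ i, x i ∈ X) →
      Tendsto x atTop (nhds y) →
      ∀ (ℓ : EuclideanSpace ℝ (Fin n)) (τ : Submodule ℝ (EuclideanSpace ℝ (Fin n))),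
        Tendsto (fun i => ‖x i - π (x i)‖⁻¹ • (x i - π (x i))) atTop (nhds ℓ) →
        Tendsto (fun i => projOp (TX (x i))) atTop (nhds (projOp τ)) →
        sinAngle ℓ τ ≤ δ) :
    -- condition (δ) at y :
    ∀ (x : ℕ → EuclideanSpace ℝ (Fin n)) (y' : ℕ → EuclideanSpace ℝ (Fin n)),
      (∀ i, x i ∈ X) → (∀ i, y' i ∈ Y) →
      Tendsto x atTop (nhds y) → Tendsto y' atTop (nhds y) →
      ∀ (ℓ : EuclideanSpace ℝ (Fin n)) (τ : Submodule ℝ (EuclideanSpace ℝ (Fin n))),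
        Tendsto (fun i => ‖x i - y' i‖⁻¹ • (x i - y' i)) atTop (nhds ℓ) →
        Tendsto (fun i => projOp (TX (x i))) atTop (nhds (projOp τ)) →
        sinAngle ℓ τ ≤ δ :=
  delta_pi_and_a_implies_delta_general X Y y TX TY π hπC hπr hdπ δ hδ0 ha hδπ

end
end
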